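/- (Predictive variance bound via Schur complement) Let R be a symmetric positive definite (t×t) covariance matrix partitioned with R₁₁ = σ² (scalar), and let t(x) = (σ² ρ, t₂(x)ᵀ)ᵀ where ρ ∈ [−1,1]. Then σ² − t(x)ᵀ R⁻¹ t(x) ≤ σ² − σ² ρ² − Γᵀ P Γ ≤ σ²(1 − ρ²), where Γ = R₂₁ R₁₁⁻¹ σ²ρ − t₂(x) and P⁻¹ = R₂₂ − R₂₁R₁₁⁻¹R₁₂ is the (positive definite) Schur complement. -/

import Mathlib

/-!
Writing `t(x) = (a, b)` with `a = σ²ρ`, the block inverse formula splits the quadratic form of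
`R⁻¹` into `a R₁₁⁻¹ a = σ²ρ²` plus the form of the inverse Schur complement `P` at
`R₂₁R₁₁⁻¹a - b = Γ`. So the first inequality is an equality,
and the second one is `ΓᵀPΓ ≥ 0`, since the Schur complement of a positive definite matrix is
positive definite.
-/

open Matrix
open scoped ComplexOrder

namespace Matrix

theorem PosDef.toBlocks₁₁ {m n R : Type*} [Ring R] [PartialOrder R] [StarRing R]
    {M : Matrix (m ⊕ n) (m ⊕ n) R} (hM : M.PosDef) : M.toBlocks₁₁.PosDef :=
  hM.submatrix Sum.inl_injective

theorem PosDef.schurComplement₁₁ {m n 𝕜 : Type*} [Fintype m] [Fintype n] [DecidableEq m]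
    [DecidableEq n] [RCLike 𝕜] {A : Matrix m m 𝕜} {B : Matrix m n 𝕜} {D : Matrix n n 𝕜}
    (hM : (fromBlocks A B Bᴴ D).PosDef) : (D - Bᴴ * A⁻¹ * B).PosDef := by
  have hA : A.PosDef := by simpa using hM.toBlocks₁₁
  let := hA.isUnit.invertible
  let := hM.isUnit.invertible
  let := invertibleOfFromBlocks₁₁Invertible A B Bᴴ D
  have hS : IsUnit (D - Bᴴ * A⁻¹ * B) := by
    simpa [invOf_eq_nonsing_inv] using isUnit_of_invertible (D - Bᴴ * ⅟A * B)
  exact ((PosDef.fromBlocks₁₁ B D hA).mp hM.posSemidef).posDef_iff_isUnit.mpr hS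

theorem dotProduct_inv_fromBlocks_mulVec {m n α : Type*} [Fintype m] [Fintype n]
    [DecidableEq m] [DecidableEq n] [CommRing α] {A : Matrix m m α} {B : Matrix m n α}
    {C : Matrix n m α} {D : Matrix n n α} (hA : IsUnit A) (hS : IsUnit (D - C * A⁻¹ * B))
    (a : m → α) (b : n → α) :
    (a ⊕ᵥ b) ⬝ᵥ ((fromBlocks A B C D)⁻¹ *ᵥ (a ⊕ᵥ b)) =
      a ⬝ᵥ (A⁻¹ *ᵥ a) +
        (a ᵥ* (A⁻¹ * B) - b) ⬝ᵥ ((D - C * A⁻¹ * B)⁻¹ *ᵥ (C *ᵥ (A⁻¹ *ᵥ a) - b)) := by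
  let := hA.invertible
  let : Invertible (D - C * ⅟A * B) := by rw [invOf_eq_nonsing_inv]; exact hS.invertible
  let := fromBlocks₁₁Invertible A B C D
  rw [← invOf_eq_nonsing_inv, invOf_fromBlocks₁₁_eq]
  simp only [invOf_eq_nonsing_inv, fromBlocks_mulVec, Sum.elim_comp_inl, Sum.elim_comp_inr,
    sumElim_dotProduct_sumElim, add_mulVec, neg_mulVec, dotProduct_add, dotProduct_neg,
    dotProduct_sub, sub_dotProduct, mulVec_sub, mulVec_mulVec, ← dotProduct_mulVec,
    Matrix.mul_assoc]
  ring

end Matrix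

theorem predictive_variance_bound_general (n : ℕ) (σsq ρ : ℝ)
    (R12 : Matrix (Fin 1) (Fin n) ℝ) (R22 : Matrix (Fin n) (Fin n) ℝ)
    (t₂ : Fin n → ℝ)
    (hR : (Matrix.fromBlocks (σsq • (1 : Matrix (Fin 1) (Fin 1) ℝ)) R12 R12ᵀ R22).PosDef) :
    let R := Matrix.fromBlocks (σsq • (1 : Matrix (Fin 1) (Fin 1) ℝ)) R12 R12ᵀ R22
    let tv : Fin 1 ⊕ Fin n → ℝ := Sum.elim (fun _ => σsq * ρ) t₂
    let Γ : Fin n → ℝ := fun i => ρ * R12ᵀ i 0 - t₂ i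
    let P := (R22 - R12ᵀ * (σsq⁻¹ • (1 : Matrix (Fin 1) (Fin 1) ℝ)) * R12)⁻¹
    σsq - tv ⬝ᵥ (R⁻¹ *ᵥ tv) ≤ σsq - σsq * ρ ^ 2 - Γ ⬝ᵥ (P *ᵥ Γ) ∧
      σsq - σsq * ρ ^ 2 - Γ ⬝ᵥ (P *ᵥ Γ) ≤ σsq * (1 - ρ ^ 2) := by
  intro R tv Γ P
  rw [← conjTranspose_eq_transpose_of_trivial] at hR
  have hA : (σsq • (1 : Matrix (Fin 1) (Fin 1) ℝ)).PosDef := by simpa using hR.toBlocks₁₁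
  have hσ : σsq ≠ 0 := by simpa using (hA.diag_pos (i := 0)).ne'
  have hAinv : (σsq • (1 : Matrix (Fin 1) (Fin 1) ℝ))⁻¹ = σsq⁻¹ • 1 :=
    inv_eq_left_inv (by simp [hσ])
  have hS := hR.schurComplement₁₁
  rw [hAinv, conjTranspose_eq_transpose_of_trivial] at hS
  have hquad : tv ⬝ᵥ (R⁻¹ *ᵥ tv) = σsq * ρ ^ 2 + Γ ⬝ᵥ (P *ᵥ Γ) := by
    have hmean : (σsq⁻¹ • (1 : Matrix (Fin 1) (Fin 1) ℝ)) *ᵥ (fun _ => σsq * ρ) = fun _ => ρ := by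
      ext; simp [smul_mulVec, hσ]
    have hrow : (fun _ => σsq * ρ) ᵥ* (σsq⁻¹ • (1 : Matrix (Fin 1) (Fin 1) ℝ) * R12) - t₂ = Γ := by
      ext; simp [Γ, vecMul, dotProduct, field]
    have hcol : R12ᵀ *ᵥ (fun _ => ρ) - t₂ = Γ := by
      ext; simp [Γ, mulVec, dotProduct, mul_comm]
    rw [dotProduct_inv_fromBlocks_mulVec hA.isUnit (hAinv ▸ hS.isUnit), hAinv, hmean, hrow, hcol]
    congr 1
    simp [dotProduct, pow_two, mul_assoc]
  have hΓ : 0 ≤ Γ ⬝ᵥ (P *ᵥ Γ) := by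
    simpa only [star_trivial] using hS.inv.posSemidef.dotProduct_mulVec_nonneg Γ
  constructor <;> linarith

/-- Predictive variance bound via the Schur complement: with `R` positive definite,
`R₁₁ = σ²`, and `t(x) = (σ²ρ, t₂(x))`, we have
`σ² − t(x)ᵀR⁻¹t(x) ≤ σ² − σ²ρ² − ΓᵀPΓ ≤ σ²(1 − ρ²)`. -/
theorem predictive_variance_bound (n : ℕ) (σsq ρ : ℝ) (hσ : 0 < σsq) (hρ : |ρ| ≤ 1)
    (R12 : Matrix (Fin 1) (Fin n) ℝ) (R22 : Matrix (Fin n) (Fin n) ℝ)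
    (t₂ : Fin n → ℝ)
    (hR : (Matrix.fromBlocks (σsq • (1 : Matrix (Fin 1) (Fin 1) ℝ)) R12 R12ᵀ R22).PosDef) :
    let R := Matrix.fromBlocks (σsq • (1 : Matrix (Fin 1) (Fin 1) ℝ)) R12 R12ᵀ R22
    let tv : Fin 1 ⊕ Fin n → ℝ := Sum.elim (fun _ => σsq * ρ) t₂
    let Γ : Fin n → ℝ := fun i => ρ * R12ᵀ i 0 - t₂ i
    let P := (R22 - R12ᵀ * (σsq⁻¹ • (1 : Matrix (Fin 1) (Fin 1) ℝ)) * R12)⁻¹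
    σsq - tv ⬝ᵥ (R⁻¹ *ᵥ tv) ≤ σsq - σsq * ρ ^ 2 - Γ ⬝ᵥ (P *ᵥ Γ) ∧
      σsq - σsq * ρ ^ 2 - Γ ⬝ᵥ (P *ᵥ Γ) ≤ σsq * (1 - ρ ^ 2) :=
  predictive_variance_bound_general n σsq ρ R12 R22 t₂ hR
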